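/- arXiv:2410.05540 — 2 statements merged into one kernel-verified Lean document; each statement's English description precedes it below -/
import Mathlib

section
/- Define s : (Fin (N−1) → ℝ) → ℝ by s(x) = max_i x_i if max_i x_i + min_i x_i ≥ 0, and s(x) = min_i x_i otherwise (so that s(x) is a coordinate of x with |s(x)| = max_i |x_i|). Let D = { x | ∀ i j, |x_i − x_j| ≤ ηΔ }, let ν be an N-node adversarial strategy with ν(D) = 1, and let κ be the pushforward of ν under s. Then PA_2(κ) = PA_N(ν), and if these are positive then MSE_2(κ) ≥ MSE_N(ν). -/
open MeasureTheory ProbabilityTheory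

noncomputable section

def midN (N : ℕ) (p : ℝ × (Fin (N-1) → ℝ)) : ℝ :=
  (max p.1 (⨆ i, p.2 i) + min p.1 (⨅ i, p.2 i)) / 2

def accN (N : ℕ) (η Δ : ℝ) : Set (ℝ × (Fin (N-1) → ℝ)) :=
  {p | max p.1 (⨆ i, p.2 i) - min p.1 (⨅ i, p.2 i) ≤ η * Δ}

def PA_N (N : ℕ) (η Δ : ℝ) (μ : Measure ℝ) (ν : Measure (Fin (N-1) → ℝ)) : ℝ :=
  ((μ.prod ν) (accN N η Δ)).toReal

def MSE_N (N : ℕ) (η Δ : ℝ) (μ : Measure ℝ) (ν : Measure (Fin (N-1) → ℝ)) : ℝ :=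
  ∫ p, (midN N p) ^ 2 ∂((μ.prod ν)[|accN N η Δ])

def mid2 (p : ℝ × ℝ) : ℝ := (max p.1 p.2 + min p.1 p.2) / 2

def acc2 (η Δ : ℝ) : Set (ℝ × ℝ) := {p | max p.1 p.2 - min p.1 p.2 ≤ η * Δ}

def PA_2 (η Δ : ℝ) (μ κ : Measure ℝ) : ℝ := ((μ.prod κ) (acc2 η Δ)).toReal

def MSE_2 (η Δ : ℝ) (μ κ : Measure ℝ) : ℝ :=
  ∫ p, (mid2 p) ^ 2 ∂((μ.prod κ)[|acc2 η Δ])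

def cN (N : ℕ) (η Δ : ℝ) (μ : Measure ℝ) (α : ℝ) : ℝ :=
  sSup {r | ∃ ν : Measure (Fin (N-1) → ℝ), IsProbabilityMeasure ν ∧
    α ≤ PA_N N η Δ μ ν ∧ r = MSE_N N η Δ μ ν}

def c2 (η Δ : ℝ) (μ : Measure ℝ) (α : ℝ) : ℝ :=
  sSup {r | ∃ κ : Measure ℝ, IsProbabilityMeasure κ ∧
    α ≤ PA_2 η Δ μ κ ∧ r = MSE_2 η Δ μ κ}

def IsBestResponseN (N : ℕ) (η Δ : ℝ) (μ : Measure ℝ) (QAD : ℝ → ℝ → ℝ)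
    (ν : Measure (Fin (N-1) → ℝ)) : Prop :=
  IsProbabilityMeasure ν ∧ 0 < PA_N N η Δ μ ν ∧
    ∀ ν' : Measure (Fin (N-1) → ℝ), IsProbabilityMeasure ν' → 0 < PA_N N η Δ μ ν' →
      QAD (MSE_N N η Δ μ ν') (PA_N N η Δ μ ν') ≤ QAD (MSE_N N η Δ μ ν) (PA_N N η Δ μ ν)

def IsBestResponse2 (η Δ : ℝ) (μ : Measure ℝ) (QAD : ℝ → ℝ → ℝ) (κ : Measure ℝ) : Prop :=
  IsProbabilityMeasure κ ∧ 0 < PA_2 η Δ μ κ ∧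
    ∀ κ' : Measure ℝ, IsProbabilityMeasure κ' → 0 < PA_2 η Δ μ κ' →
      QAD (MSE_2 η Δ μ κ') (PA_2 η Δ μ κ') ≤ QAD (MSE_2 η Δ μ κ) (PA_2 η Δ μ κ)

/-- The adversarial report of maximal absolute value: the max coordinate if
`max + min ≥ 0`, and the min coordinate otherwise. -/
def selFun (N : ℕ) (x : Fin (N-1) → ℝ) : ℝ :=
  if 0 ≤ (⨆ i, x i) + (⨅ i, x i) then ⨆ i, x i else ⨅ i, x i

/-!
Write `M`, `m` for the largest and smallest adversarial reports and `s` for the one of larger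
absolute value. For an honest report `|n| ≤ Δ` and a spread `M - m ≤ ηΔ`, the `N`-node spread
`max n M - min n m` is at most `ηΔ` exactly when `|n - s|` is (this uses `η ≥ 2`), so replacing the
adversary's reports by the single report `s` preserves acceptance almost surely; and
`|max n M + min n m| ≤ |n + s|` always, so the squared midpoint can only grow. The pushforward of
`μ ⊗ ν` along `(n, x) ↦ (n, s x)` is `μ ⊗ κ`, and the conditional measures on the two acceptance
events correspond under it.
-/

section Order

variable {n M m c : ℝ}

theorem max_sub_min_le_iff_abs_sub_le (hmM : m ≤ M) (hc : M - m ≤ c) (hsum : 0 ≤ M + m)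
    (hn : 2 * n ≤ c) : max n M - min n m ≤ c ↔ |n - M| ≤ c := by
  rw [abs_le]
  constructor
  · intro h
    constructor <;>
      linarith [le_max_left n M, le_max_right n M, min_le_left n m, min_le_right n m]
  · rintro ⟨h₁, h₂⟩
    rcases le_total n m with hnm | hmn
    · rw [max_eq_right (hnm.trans hmM), min_eq_left hnm]
      linarith
    · rw [min_eq_right hmn]
      rcases le_total n M with hnM | hMn
      · rw [max_eq_right hnM]; exact hc
      · rw [max_eq_left hMn]; linarith

theorem abs_max_add_min_le (hmM : m ≤ M) (hsum : 0 ≤ M + m) :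
    |max n M + min n m| ≤ |n + M| := by
  rcases le_total n m with hnm | hmn
  · rw [max_eq_right (hnm.trans hmM), min_eq_left hnm, add_comm]
  · rw [min_eq_right hmn]
    have h₀ : 0 ≤ max n M + m := by linarith [le_max_right n M]
    have h₁ : max n M + m ≤ n + M := by
      rcases le_total n M with hnM | hMn
      · rw [max_eq_right hnM]; linarith
      · rw [max_eq_left hMn]; linarith
    rw [abs_of_nonneg h₀, abs_of_nonneg (h₀.trans h₁)]
    exact h₁

theorem max_sub_min_le_iff_abs_sub_ite_le (hmM : m ≤ M) (hc : M - m ≤ c) (hn : 2 * |n| ≤ c) :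
    max n M - min n m ≤ c ↔ |n - if 0 ≤ M + m then M else m| ≤ c := by
  split_ifs with hsum
  · exact max_sub_min_le_iff_abs_sub_le hmM hc hsum (by linarith [le_abs_self n])
  · have := max_sub_min_le_iff_abs_sub_le (n := -n) (M := -m) (m := -M) (c := c)
      (neg_le_neg hmM) (by linarith) (by linarith) (by linarith [neg_abs_le n])
    rwa [max_neg_neg, min_neg_neg, neg_sub_neg, ← abs_neg, neg_sub, sub_neg_eq_add,
      add_comm, ← sub_eq_add_neg] at this

theorem sq_max_add_min_le_sq_add_ite (hmM : m ≤ M) :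
    (max n M + min n m) ^ 2 ≤ (n + if 0 ≤ M + m then M else m) ^ 2 := by
  refine sq_le_sq.2 ?_
  split_ifs with hsum
  · exact abs_max_add_min_le hmM hsum
  · have := abs_max_add_min_le (n := -n) (M := -m) (m := -M) (neg_le_neg hmM) (by linarith)
    rwa [max_neg_neg, min_neg_neg, ← neg_add, abs_neg, ← neg_add, abs_neg, add_comm (min n m)]
      at this

end Order

section SupInf

variable {ι : Type*}

theorem Real.iInf_le_iSup_of_finite [Finite ι] (x : ι → ℝ) : ⨅ i, x i ≤ ⨆ i, x i := by
  cases isEmpty_or_nonempty ι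
  · simp
  · exact ciInf_le_ciSup (Finite.bddBelow_range x) (Finite.bddAbove_range x)

theorem Real.iSup_sub_iInf_le {x : ι → ℝ} {c : ℝ} (hc : 0 ≤ c)
    (hx : ∀ i j, |x i - x j| ≤ c) : (⨆ i, x i) - ⨅ i, x i ≤ c := by
  cases isEmpty_or_nonempty ι
  · simpa using hc
  · have hle : ∀ i, x i - c ≤ ⨅ j, x j := fun i =>
      le_ciInf fun j => by linarith [(abs_le.1 (hx i j)).2]
    have : ⨆ i, x i ≤ c + ⨅ j, x j := ciSup_le fun i => by linarith [hle i]
    linarith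

theorem Real.measurable_iSup [Countable ι] : Measurable fun x : ι → ℝ => ⨆ i, x i :=
  Measurable.iSup fun i => measurable_pi_apply i

theorem Real.measurable_iInf [Countable ι] : Measurable fun x : ι → ℝ => ⨅ i, x i :=
  Measurable.iInf fun i => measurable_pi_apply i

theorem measurableSet_setOf_forall_abs_sub_le [Countable ι] (c : ℝ) :
    MeasurableSet {x : ι → ℝ | ∀ i j, |x i - x j| ≤ c} := by
  simp only [Set.ofPred_forall]
  exact .iInter fun i => .iInter fun j =>
    measurableSet_le ((measurable_pi_apply i).sub (measurable_pi_apply j)).abs measurable_const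

end SupInf

section Conditioning

variable {α β : Type*} [MeasurableSpace α] [MeasurableSpace β]

theorem ProbabilityTheory.cond_map_of_preimage_ae_eq {ρ : Measure α} {T : α → β}
    (hT : Measurable T) {s : Set β} (hs : MeasurableSet s) {t : Set α}
    (hst : T ⁻¹' s =ᵐ[ρ] t) : (ρ.map T)[|s] = (ρ[|t]).map T := by
  rw [cond, cond, Measure.map_smul, Measure.restrict_map hT hs, Measure.map_apply hT hs,
    measure_congr hst, Measure.restrict_congr_set hst]

end Conditioning

theorem measurable_selFun (N : ℕ) : Measurable (selFun N) :=
  Measurable.ite (measurableSet_le measurable_const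
    (Real.measurable_iSup.add Real.measurable_iInf)) Real.measurable_iSup Real.measurable_iInf

theorem measurableSet_acc2 (η Δ : ℝ) : MeasurableSet (acc2 η Δ) :=
  measurableSet_le ((measurable_fst.max measurable_snd).sub (measurable_fst.min measurable_snd))
    measurable_const

theorem measurable_mid2 : Measurable mid2 :=
  ((measurable_fst.max measurable_snd).add (measurable_fst.min measurable_snd)).div_const 2

theorem mem_acc2_iff {η Δ : ℝ} {p : ℝ × ℝ} : p ∈ acc2 η Δ ↔ |p.1 - p.2| ≤ η * Δ := by
  rw [acc2, Set.mem_ofPred_eq, max_sub_min_eq_abs']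

theorem mid2_eq (p : ℝ × ℝ) : mid2 p = (p.1 + p.2) / 2 := by
  rw [mid2, max_add_min]

theorem mem_accN_iff_mem_acc2_selFun {N : ℕ} {η Δ n : ℝ} {x : Fin (N-1) → ℝ} (hη : 2 ≤ η)
    (hn : n ∈ Set.Icc (-Δ) Δ) (hx : ∀ i j, |x i - x j| ≤ η * Δ) :
    (n, x) ∈ accN N η Δ ↔ (n, selFun N x) ∈ acc2 η Δ := by
  have hΔ : 0 ≤ Δ := by linarith [hn.1, hn.2]
  have hn' : 2 * |n| ≤ η * Δ := by nlinarith [abs_le.2 hn]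
  rw [mem_acc2_iff]
  exact max_sub_min_le_iff_abs_sub_ite_le (Real.iInf_le_iSup_of_finite x)
    (Real.iSup_sub_iInf_le (by positivity) hx) hn'

theorem sq_midN_le_sq_mid2_selFun {N : ℕ} (n : ℝ) (x : Fin (N-1) → ℝ) :
    midN N (n, x) ^ 2 ≤ mid2 (n, selFun N x) ^ 2 := by
  rw [midN, mid2_eq, div_pow, div_pow]
  exact div_le_div_of_nonneg_right
    (sq_max_add_min_le_sq_add_ite (Real.iInf_le_iSup_of_finite x)) (by norm_num)

theorem abs_mid2_le {η Δ : ℝ} {p : ℝ × ℝ} (hp₁ : p.1 ∈ Set.Icc (-Δ) Δ) (hp : p ∈ acc2 η Δ) :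
    |mid2 p| ≤ Δ + η * Δ / 2 := by
  rw [mem_acc2_iff, abs_le] at hp
  rw [mid2_eq, abs_le]
  constructor <;> linarith [hp₁.1, hp₁.2]

theorem integrable_sq_mid2_cond {η Δ : ℝ} {μ κ : Measure ℝ}
    (hμ : ∀ᵐ n ∂μ, n ∈ Set.Icc (-Δ) Δ) :
    Integrable (fun p => mid2 p ^ 2) ((μ.prod κ)[|acc2 η Δ]) := by
  refine .of_bound (measurable_mid2.pow_const 2).aestronglyMeasurable ((Δ + η * Δ / 2) ^ 2) ?_
  filter_upwards [cond_absolutelyContinuous.ae_le (Measure.quasiMeasurePreserving_fst.ae hμ),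
    ae_cond_mem (measurableSet_acc2 η Δ)] with p hp₁ hp
  rw [Real.norm_eq_abs, abs_pow, pow_le_pow_iff_left₀ (abs_nonneg _)
    ((abs_nonneg _).trans (abs_mid2_le hp₁ hp)) two_ne_zero]
  exact abs_mid2_le hp₁ hp

theorem prod_map_selFun (N : ℕ) (μ : Measure ℝ) [SFinite μ] (ν : Measure (Fin (N-1) → ℝ))
    [SFinite ν] : μ.prod (ν.map (selFun N)) = (μ.prod ν).map (Prod.map id (selFun N)) := by
  rw [← Measure.map_prod_map μ ν measurable_id (measurable_selFun N), Measure.map_id]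

theorem stmt5_general {N : ℕ} {η Δ : ℝ} (hη : 2 ≤ η)
    (μ : Measure ℝ) [IsProbabilityMeasure μ] (hμ : μ (Set.Icc (-Δ) Δ) = 1)
    (ν : Measure (Fin (N-1) → ℝ)) [IsProbabilityMeasure ν]
    (hD : ν {x | ∀ i j, |x i - x j| ≤ η * Δ} = 1)
    (κ : Measure ℝ) (hκ : κ = ν.map (selFun N)) :
    PA_2 η Δ μ κ = PA_N N η Δ μ ν ∧
      (0 < PA_N N η Δ μ ν → MSE_N N η Δ μ ν ≤ MSE_2 η Δ μ κ) := by
  have hμ' : ∀ᵐ n ∂μ, n ∈ Set.Icc (-Δ) Δ := (mem_ae_iff_prob_eq_one measurableSet_Icc).2 hμ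
  have hν' : ∀ᵐ x ∂ν, ∀ i j, |x i - x j| ≤ η * Δ :=
    (mem_ae_iff_prob_eq_one (measurableSet_setOf_forall_abs_sub_le _)).2 hD
  set T : ℝ × (Fin (N-1) → ℝ) → ℝ × ℝ := Prod.map id (selFun N)
  have hT : Measurable T := measurable_id.prodMap (measurable_selFun N)
  have hκT : μ.prod κ = (μ.prod ν).map T := hκ ▸ prod_map_selFun N μ ν
  have hacc : T ⁻¹' acc2 η Δ =ᵐ[μ.prod ν] accN N η Δ := by
    filter_upwards [Measure.quasiMeasurePreserving_fst.ae hμ',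
      Measure.quasiMeasurePreserving_snd.ae hν'] with p hn hx
    exact propext (mem_accN_iff_mem_acc2_selFun hη hn hx).symm
  have hcond : (μ.prod κ)[|acc2 η Δ] = ((μ.prod ν)[|accN N η Δ]).map T := by
    rw [hκT, cond_map_of_preimage_ae_eq hT (measurableSet_acc2 η Δ) hacc]
  have hint := integrable_sq_mid2_cond (η := η) (κ := κ) hμ'
  rw [hcond, integrable_map_measure (measurable_mid2.pow_const 2).aestronglyMeasurable
    hT.aemeasurable] at hint
  refine ⟨?_, fun _ => ?_⟩
  · rw [PA_2, PA_N, hκT, Measure.map_apply hT (measurableSet_acc2 η Δ), measure_congr hacc]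
  · rw [MSE_2, hcond, integral_map hT.aemeasurable
      (measurable_mid2.pow_const 2).aestronglyMeasurable]
    exact integral_mono_of_nonneg (.of_forall fun _ => sq_nonneg _) hint
      (.of_forall fun p => sq_midN_le_sq_mid2_selFun p.1 p.2)

theorem stmt5 {N : ℕ} (hN : 2 ≤ N) {η Δ : ℝ} (hΔ : 0 < Δ) (hη : 2 ≤ η)
    (μ : Measure ℝ) [IsProbabilityMeasure μ] (hμ : μ (Set.Icc (-Δ) Δ) = 1)
    (ν : Measure (Fin (N-1) → ℝ)) [IsProbabilityMeasure ν]
    (hD : ν {x | ∀ i j, |x i - x j| ≤ η * Δ} = 1)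
    (κ : Measure ℝ) (hκ : κ = ν.map (selFun N)) :
    PA_2 η Δ μ κ = PA_N N η Δ μ ν ∧
      (0 < PA_N N η Δ μ ν → MSE_N N η Δ μ ν ≤ MSE_2 η Δ μ κ) :=
  stmt5_general hη μ hμ ν hD κ hκ
end
end

section
/- Assume that for every a ∈ (0,1] there exists an N-node strategy ν_a with PA_N^η(ν_a) ≥ a and MSE_N^η(ν_a) = c_η^N(a), and that a best response exists in the N-node game at threshold η. Then sInf { Q_DC(MSE_N^η(ν), PA_N^η(ν)) : ν a best response at threshold η } = sInf { Q_DC(c_η^N(α), α) : α ∈ (0,1] and Q_AD(c_η^N(α), α) ≥ Q_AD(c_η^N(a), a) for all a ∈ (0,1] }. That is, the data collector's worst-case utility against best responses at threshold η equals the value computed by the algorithm from the curve α ↦ c_η^N(α) alone. -/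
open MeasureTheory ProbabilityTheory

noncomputable section

/-!
Fix a best response `s₀` with value `V`. Every point `(c a, a)` of the curve is attained by
a strategy with acceptance probability at least `a`, so `Q (c a) a ≤ V` by monotonicity of `Q`
in its second argument. A best response `s` has `mse s ≤ c (pa s)` and value `V`, so strict
monotonicity in the first argument forces `mse s = c (pa s)`: `pa s` maximises
`α ↦ Q (c α) α` on `(0, 1]`. Conversely, a strategy attaining the curve at a maximiser `α` has
value at least `Q (c α) α = V`, hence is a best response, and strict monotonicity in the second
argument forces its acceptance probability to be exactly `α`. So both infima are taken over the
same set of values of `QDC`.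
-/

section BestResponse

def IsBestResponse {S : Type*} (adm : S → Prop) (mse pa : S → ℝ) (Q : ℝ → ℝ → ℝ) (s : S) :
    Prop :=
  adm s ∧ 0 < pa s ∧ ∀ t, adm t → 0 < pa t → Q (mse t) (pa t) ≤ Q (mse s) (pa s)

variable {S : Type*} {adm : S → Prop} {mse pa : S → ℝ} {Q : ℝ → ℝ → ℝ} {c : ℝ → ℝ}

lemma IsBestResponse.curve_le (hQ2 : ∀ x, Monotone (Q x))
    (hatt : ∀ a : ℝ, 0 < a → a ≤ 1 → ∃ s, adm s ∧ a ≤ pa s ∧ mse s = c a)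
    {s : S} (hs : IsBestResponse adm mse pa Q s) {a : ℝ} (ha : 0 < a) (ha1 : a ≤ 1) :
    Q (c a) a ≤ Q (mse s) (pa s) := by
  obtain ⟨t, ht, hat, hmse⟩ := hatt a ha ha1
  calc Q (c a) a ≤ Q (c a) (pa t) := hQ2 _ hat
    _ = Q (mse t) (pa t) := by rw [hmse]
    _ ≤ Q (mse s) (pa s) := hs.2.2 t ht (ha.trans_le hat)

lemma IsBestResponse.mse_eq (hQ1 : ∀ y, StrictMono fun x => Q x y)
    (hQ2 : ∀ x, Monotone (Q x))
    (hpa : ∀ s, adm s → pa s ≤ 1) (hmse : ∀ s, adm s → mse s ≤ c (pa s))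
    (hatt : ∀ a : ℝ, 0 < a → a ≤ 1 → ∃ s, adm s ∧ a ≤ pa s ∧ mse s = c a)
    {s : S} (hs : IsBestResponse adm mse pa Q s) : mse s = c (pa s) :=
  (hmse s hs.1).antisymm <| (hQ1 _).le_iff_le.mp <| hs.curve_le hQ2 hatt hs.2.1 (hpa s hs.1)

lemma IsBestResponse.maximizes_curve (hQ1 : ∀ y, StrictMono fun x => Q x y)
    (hQ2 : ∀ x, Monotone (Q x))
    (hpa : ∀ s, adm s → pa s ≤ 1) (hmse : ∀ s, adm s → mse s ≤ c (pa s))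
    (hatt : ∀ a : ℝ, 0 < a → a ≤ 1 → ∃ s, adm s ∧ a ≤ pa s ∧ mse s = c a)
    {s : S} (hs : IsBestResponse adm mse pa Q s) (a : ℝ) (ha : 0 < a) (ha1 : a ≤ 1) :
    Q (c a) a ≤ Q (c (pa s)) (pa s) :=
  hs.mse_eq hQ1 hQ2 hpa hmse hatt ▸ hs.curve_le hQ2 hatt ha ha1

lemma exists_isBestResponse_of_maximizes_curve (hQ1 : ∀ y, StrictMono fun x => Q x y)
    (hQ2 : ∀ x, StrictMono (Q x))
    (hpa : ∀ s, adm s → pa s ≤ 1) (hmse : ∀ s, adm s → mse s ≤ c (pa s))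
    (hatt : ∀ a : ℝ, 0 < a → a ≤ 1 → ∃ s, adm s ∧ a ≤ pa s ∧ mse s = c a)
    (hex : ∃ s, IsBestResponse adm mse pa Q s) {α : ℝ} (hα : 0 < α) (hα1 : α ≤ 1)
    (hmax : ∀ a : ℝ, 0 < a → a ≤ 1 → Q (c a) a ≤ Q (c α) α) :
    ∃ s, IsBestResponse adm mse pa Q s ∧ mse s = c α ∧ pa s = α := by
  obtain ⟨s₀, hs₀⟩ := hex
  have hQ2' : ∀ x, Monotone (Q x) := fun x => (hQ2 x).monotone
  have hvalue : Q (c α) α = Q (mse s₀) (pa s₀) :=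
    (hs₀.curve_le hQ2' hatt hα hα1).antisymm <| hs₀.mse_eq hQ1 hQ2' hpa hmse hatt ▸
      hmax _ hs₀.2.1 (hpa s₀ hs₀.1)
  obtain ⟨t, ht, hαt, hmse_t⟩ := hatt α hα hα1
  have hpos : 0 < pa t := hα.trans_le hαt
  have hpa_t : pa t = α := by
    refine le_antisymm ((hQ2 (c α)).le_iff_le.mp ?_) hαt
    rw [hvalue, ← hmse_t]
    exact hs₀.2.2 t ht hpos
  refine ⟨t, ⟨ht, hpos, fun t' ht' hpos' => ?_⟩, hmse_t, hpa_t⟩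
  rw [hmse_t, hpa_t, hvalue]
  exact hs₀.2.2 t' ht' hpos'

end BestResponse

lemma measurableSet_accN (N : ℕ) (η Δ : ℝ) : MeasurableSet (accN N η Δ) := by
  unfold accN
  measurability

lemma abs_midN_le {N : ℕ} {η Δ : ℝ} {p : ℝ × (Fin (N-1) → ℝ)} (hp : p ∈ accN N η Δ)
    (hp₁ : p.1 ∈ Set.Icc (-Δ) Δ) : |midN N p| ≤ Δ + η * Δ / 2 := by
  have hmax : p.1 ≤ max p.1 (⨆ i, p.2 i) := le_max_left _ _
  have hmin : min p.1 (⨅ i, p.2 i) ≤ p.1 := min_le_left _ _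
  simp only [accN, Set.mem_ofPred_eq] at hp
  rw [midN, abs_le]
  constructor <;> linarith [hp₁.1, hp₁.2]

lemma MSE_N_le {N : ℕ} {η Δ : ℝ} {μ : Measure ℝ} [IsProbabilityMeasure μ]
    (hμ : μ (Set.Icc (-Δ) Δ) = 1) (ν : Measure (Fin (N-1) → ℝ)) [SFinite ν] :
    MSE_N N η Δ μ ν ≤ (Δ + η * Δ / 2) ^ 2 := by
  have hμ_ae : ∀ᵐ x ∂μ, x ∈ Set.Icc (-Δ) Δ :=
    (ae_mem_iff_measure_eq measurableSet_Icc.nullMeasurableSet).mpr (by rw [hμ, measure_univ])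
  have hbound : ∀ᵐ p ∂(μ.prod ν)[|accN N η Δ], ‖midN N p ^ 2‖ ≤ (Δ + η * Δ / 2) ^ 2 := by
    filter_upwards [ae_cond_mem (measurableSet_accN N η Δ),
      cond_absolutelyContinuous.ae_le (Measure.quasiMeasurePreserving_fst.ae hμ_ae)] with p hp hp₁
    rw [Real.norm_eq_abs, abs_pow]
    exact pow_le_pow_left₀ (abs_nonneg _) (abs_midN_le hp hp₁) 2
  calc MSE_N N η Δ μ ν ≤ (Δ + η * Δ / 2) ^ 2 * ((μ.prod ν)[|accN N η Δ]).real Set.univ :=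
        (Real.le_norm_self _).trans (norm_integral_le_of_norm_le_const hbound)
    _ ≤ (Δ + η * Δ / 2) ^ 2 :=
        mul_le_of_le_one_right (sq_nonneg _) measureReal_le_one

lemma PA_N_le_one {N : ℕ} {η Δ : ℝ} (μ : Measure ℝ) [IsProbabilityMeasure μ]
    (ν : Measure (Fin (N-1) → ℝ)) [IsProbabilityMeasure ν] : PA_N N η Δ μ ν ≤ 1 :=
  measureReal_le_one

/-- Without the bound `MSE_N_le` the `sSup` defining `cN` could be the junk value `0`. -/
lemma MSE_N_le_cN {N : ℕ} {η Δ : ℝ} {μ : Measure ℝ} [IsProbabilityMeasure μ]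
    (hμ : μ (Set.Icc (-Δ) Δ) = 1) (ν : Measure (Fin (N-1) → ℝ)) [IsProbabilityMeasure ν] :
    MSE_N N η Δ μ ν ≤ cN N η Δ μ (PA_N N η Δ μ ν) := by
  refine le_csSup ⟨(Δ + η * Δ / 2) ^ 2, ?_⟩ ⟨ν, inferInstance, le_rfl, rfl⟩
  rintro r ⟨ν', hν', -, rfl⟩
  exact MSE_N_le hμ ν'

theorem stmt16_general {N : ℕ} {η Δ : ℝ}
    (μ : Measure ℝ) [IsProbabilityMeasure μ] (hμ : μ (Set.Icc (-Δ) Δ) = 1)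
    (QAD : ℝ → ℝ → ℝ)
    (hQ1 : ∀ y : ℝ, StrictMono fun x => QAD x y) (hQ2 : ∀ x : ℝ, StrictMono (QAD x))
    (QDC : ℝ → ℝ → ℝ)
    (hatt : ∀ a : ℝ, 0 < a → a ≤ 1 → ∃ ν : Measure (Fin (N-1) → ℝ),
      IsProbabilityMeasure ν ∧ a ≤ PA_N N η Δ μ ν ∧ MSE_N N η Δ μ ν = cN N η Δ μ a)
    (hex : ∃ ν : Measure (Fin (N-1) → ℝ), IsBestResponseN N η Δ μ QAD ν) :
    sInf {u : ℝ | ∃ ν : Measure (Fin (N-1) → ℝ), IsBestResponseN N η Δ μ QAD ν ∧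
        u = QDC (MSE_N N η Δ μ ν) (PA_N N η Δ μ ν)} =
      sInf {u : ℝ | ∃ α : ℝ, 0 < α ∧ α ≤ 1 ∧
        (∀ a : ℝ, 0 < a → a ≤ 1 → QAD (cN N η Δ μ a) a ≤ QAD (cN N η Δ μ α) α) ∧
        u = QDC (cN N η Δ μ α) α} := by
  have hpa : ∀ ν : Measure (Fin (N-1) → ℝ), IsProbabilityMeasure ν → PA_N N η Δ μ ν ≤ 1 :=
    fun ν _ => PA_N_le_one μ ν
  have hmse : ∀ ν : Measure (Fin (N-1) → ℝ), IsProbabilityMeasure ν →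
      MSE_N N η Δ μ ν ≤ cN N η Δ μ (PA_N N η Δ μ ν) :=
    fun ν _ => MSE_N_le_cN hμ ν
  have hQ2' : ∀ x, Monotone (QAD x) := fun x => (hQ2 x).monotone
  congr 1
  ext u
  constructor
  · rintro ⟨ν, hν, rfl⟩
    refine ⟨_, hν.2.1, hpa ν hν.1, IsBestResponse.maximizes_curve hQ1 hQ2' hpa hmse hatt hν, ?_⟩
    rw [IsBestResponse.mse_eq hQ1 hQ2' hpa hmse hatt hν]
  · rintro ⟨α, hα, hα1, hmax, rfl⟩
    obtain ⟨ν, hν, hmse_ν, hpa_ν⟩ :=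
      exists_isBestResponse_of_maximizes_curve hQ1 hQ2 hpa hmse hatt hex hα hα1 hmax
    exact ⟨ν, hν, by rw [hmse_ν, hpa_ν]⟩

theorem stmt16 {N : ℕ} (hN : 2 ≤ N) {η Δ : ℝ} (hΔ : 0 < Δ) (hη : 2 ≤ η)
    (μ : Measure ℝ) [IsProbabilityMeasure μ] (hμ : μ (Set.Icc (-Δ) Δ) = 1)
    (QAD : ℝ → ℝ → ℝ)
    (hQ1 : ∀ y : ℝ, StrictMono fun x => QAD x y) (hQ2 : ∀ x : ℝ, StrictMono (QAD x))
    (QDC : ℝ → ℝ → ℝ)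
    (hD1 : ∀ y : ℝ, Antitone fun x => QDC x y) (hD2 : ∀ x : ℝ, Monotone (QDC x))
    (hatt : ∀ a : ℝ, 0 < a → a ≤ 1 → ∃ ν : Measure (Fin (N-1) → ℝ),
      IsProbabilityMeasure ν ∧ a ≤ PA_N N η Δ μ ν ∧ MSE_N N η Δ μ ν = cN N η Δ μ a)
    (hex : ∃ ν : Measure (Fin (N-1) → ℝ), IsBestResponseN N η Δ μ QAD ν) :
    sInf {u : ℝ | ∃ ν : Measure (Fin (N-1) → ℝ), IsBestResponseN N η Δ μ QAD ν ∧
        u = QDC (MSE_N N η Δ μ ν) (PA_N N η Δ μ ν)} =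
      sInf {u : ℝ | ∃ α : ℝ, 0 < α ∧ α ≤ 1 ∧
        (∀ a : ℝ, 0 < a → a ≤ 1 → QAD (cN N η Δ μ a) a ≤ QAD (cN N η Δ μ α) α) ∧
        u = QDC (cN N η Δ μ α) α} :=
  stmt16_general μ hμ QAD hQ1 hQ2 QDC hatt hex
end
end
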